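/- For every integer n ≥ 1 and every candidate set C ⊆ S, LB_n(C) ≤ LB_{n+2}(C) ≤ MinTotal(C). -/

import Mathlib

/-!
Formalization of guessing games (Wordle-style), following the paper's definitions:
guesses `G`, secrets `S ⊆ G`, responses `R` with `|R| > 1`, affirmative response
`r* ∈ R`, and an answering function `a` with `a(g,s) = r* ↔ g = s`.
-/

structure GuessingGame (α ρ : Type*) [DecidableEq α] [DecidableEq ρ] where
  G : Finset α
  S : Finset α
  R : Finset ρ
  rstar : ρ
  ans : α → α → ρ
  S_subset_G : S ⊆ G
  one_lt_card_R : 1 < R.card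
  rstar_mem : rstar ∈ R
  ans_mem : ∀ g ∈ G, ∀ s ∈ S, ans g s ∈ R
  ans_eq_rstar_iff : ∀ g ∈ G, ∀ s ∈ S, (ans g s = rstar ↔ g = s)

namespace GuessingGame

variable {α ρ : Type*} [DecidableEq α] [DecidableEq ρ] (gm : GuessingGame α ρ)

/-- The split `C_{g,r} = {c ∈ C : a(g,c) = r}`. -/
def split (C : Finset α) (g : α) (r : ρ) : Finset α :=
  C.filter fun c => gm.ans g c = r

/-- `nSplits(g,C) = |{r ∈ R : C_{g,r} ≠ ∅}|`. -/
def nSplits (g : α) (C : Finset α) : ℕ :=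
  (gm.R.filter fun r => (gm.split C g r).Nonempty).card

/-- The useful guesses `UG(C)`: for `|C| > 1` the guesses `g ∈ G` with
`nSplits(g,C) ≠ 1`; for `|C| ≤ 1`, `UG(C) = C`. -/
def UG (C : Finset α) : Finset α :=
  if 1 < C.card then gm.G.filter fun g => gm.nSplits g C ≠ 1 else C

/-- `MaxSplits(C) = max_{g ∈ G} nSplits(g,C)`. -/
def MaxSplits (C : Finset α) : ℕ :=
  gm.G.sup fun g => gm.nSplits g C

end GuessingGame

/-- `Bound(n,b)`: `Bound(0,b) = 0`, `Bound(n,1) = n(n+1)/2`, and for `n > 0`, `b > 1`,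
`Bound(n,b) = Σ_{i=1}^{k} i·b^{i-1} + (k+1)·(n - (b^k - 1)/(b-1))` where
`k = ⌊log_b (n(b-1)+1)⌋`. -/
def Bound (n b : ℕ) : ℕ :=
  if n = 0 then 0
  else if b = 1 then n * (n + 1) / 2
  else
    (∑ i ∈ Finset.range (Nat.log b (n * (b - 1) + 1)), (i + 1) * b ^ i) +
      (Nat.log b (n * (b - 1) + 1) + 1) *
        (n - (b ^ Nat.log b (n * (b - 1) + 1) - 1) / (b - 1))

namespace GuessingGame

variable {α ρ : Type*} [DecidableEq α] [DecidableEq ρ] (gm : GuessingGame α ρ)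

/-- Fuel-based implementation of the well-founded recursion defining `MinTotal`:
`MinTotal(∅) = 0` and for nonempty `C`,
`MinTotal(C) = min_{g ∈ UG(C)} (|C| + Σ_{r ∈ R \ {r*}} MinTotal(C_{g,r}))`.
Fuel `|C|` suffices since for a useful guess every split is a proper subset of `C`. -/
noncomputable def MinTotalAux : ℕ → Finset α → ℕ
  | 0, _ => 0
  | n + 1, C =>
    if C = ∅ then 0
    else
      sInf (↑((gm.UG C).image fun g =>
        C.card + ∑ r ∈ gm.R.erase gm.rstar, MinTotalAux n (gm.split C g r)) : Set ℕ)

/-- `MinTotal(C)`. -/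
noncomputable def MinTotal (C : Finset α) : ℕ :=
  gm.MinTotalAux C.card C

/-- `V*(g,C) = |C| + Σ_{r ∈ R \ {r*}} MinTotal(C_{g,r})`. -/
noncomputable def Vstar (g : α) (C : Finset α) : ℕ :=
  C.card + ∑ r ∈ gm.R.erase gm.rstar, gm.MinTotal (gm.split C g r)

/-- The lower bounds `LB_i` (`i ≥ 1`; `LB 0` is junk):
`LB_1(C) = Bound(|C|, MaxSplits(S))`, `LB_2(C) = Bound(|C|, MaxSplits(C))`, and for
`i ≥ 1`, `LB_{i+2}(∅) = 0` and `LB_{i+2}(C) = min_{g ∈ UG(C)} V_i(g,C)` for nonempty `C`,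
where `V_i(g,C) = |C| + Σ_{r ∈ R \ {r*}} LB_i(C_{g,r})`. -/
noncomputable def LB : ℕ → Finset α → ℕ
  | 0, _ => 0
  | 1, C => Bound C.card (gm.MaxSplits gm.S)
  | 2, C => Bound C.card (gm.MaxSplits C)
  | n + 3, C =>
    if C = ∅ then 0
    else
      sInf (↑((gm.UG C).image fun g =>
        C.card + ∑ r ∈ gm.R.erase gm.rstar, LB (n + 1) (gm.split C g r)) : Set ℕ)

/-- `V_i(g,C) = |C| + Σ_{r ∈ R \ {r*}} LB_i(C_{g,r})`. -/
noncomputable def V (i : ℕ) (g : α) (C : Finset α) : ℕ :=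
  C.card + ∑ r ∈ gm.R.erase gm.rstar, gm.LB i (gm.split C g r)

end GuessingGame

/-!
Induction on `C`. For `LB (n + 2) ≤ MinTotal` and for `n ≥ 3`, both sides are minima over the
useful guesses of `|C|` plus a sum over the splits, and the induction hypothesis compares the
summands. For `n = 1, 2` one uses that `Bound n b` is the least total depth of `n` nodes in a
`b`-ary tree: it decreases in `b`, and it is superadditive along a guess, because the affirmative
split holds at most one secret and at most `MaxSplits` of the other splits are nonempty.
-/

open Finset

def treeSize (b t : ℕ) : ℕ := ∑ i ∈ range t, b ^ i

-- The term `t` counts the nodes that do not fit into the first `t` levels of a `b`-ary tree,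
-- so `depthSum b n` is the least possible sum of depths of `n` distinct nodes of such a tree.
def depthSum (b n : ℕ) : ℕ := ∑ t ∈ range n, (n - treeSize b t)

section TreeSize

variable {b b' : ℕ}

lemma treeSize_succ (b t : ℕ) : treeSize b (t + 1) = treeSize b t + b ^ t :=
  sum_range_succ _ _

lemma treeSize_succ' (b t : ℕ) : treeSize b (t + 1) = b * treeSize b t + 1 :=
  geom_sum_succ

lemma treeSize_mono (b : ℕ) : Monotone (treeSize b) := fun _ _ h =>
  sum_le_sum_of_subset (range_subset_range.mpr h)

lemma le_treeSize (hb : 1 ≤ b) (t : ℕ) : t ≤ treeSize b t := by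
  simpa [treeSize] using sum_le_sum fun i (_ : i ∈ range t) => Nat.one_le_pow i b hb

lemma treeSize_le_treeSize_left (h : b ≤ b') (t : ℕ) : treeSize b t ≤ treeSize b' t :=
  sum_le_sum fun i _ => Nat.pow_le_pow_left h i

lemma treeSize_one (t : ℕ) : treeSize 1 t = t := by
  simp [treeSize]

lemma treeSize_le_iff (hb : 2 ≤ b) {t n : ℕ} : treeSize b t ≤ n ↔ b ^ t ≤ n * (b - 1) + 1 := by
  have hmul : treeSize b t * (b - 1) = b ^ t - 1 := geom_sum_mul_of_one_le (by omega) t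
  have hpow : 1 ≤ b ^ t := Nat.one_le_pow t b (by omega)
  rw [← Nat.mul_le_mul_right_iff (by omega : 0 < b - 1)]
  omega

lemma sum_treeSize_sub (b k : ℕ) :
    ∑ t ∈ range (k + 1), (treeSize b k - treeSize b t) = ∑ i ∈ range k, (i + 1) * b ^ i := by
  induction k with
  | zero => simp
  | succ k ih =>
    have hstep : ∀ t ∈ range (k + 1),
        treeSize b (k + 1) - treeSize b t = (treeSize b k - treeSize b t) + b ^ k := by
      intro t ht
      have := treeSize_mono b (Nat.lt_succ_iff.mp (mem_range.mp ht))
      rw [treeSize_succ]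
      omega
    rw [sum_range_succ, Nat.sub_self, add_zero, sum_congr rfl hstep, sum_add_distrib, ih,
      sum_const, card_range, smul_eq_mul, sum_range_succ]

end TreeSize

section DepthSum

variable {b b' : ℕ}

lemma depthSum_eq_sum_range (hb : 1 ≤ b) {n M : ℕ} (hn : n ≤ treeSize b M) :
    depthSum b n = ∑ t ∈ range M, (n - treeSize b t) := by
  have extend : ∀ N ≤ M + n, n ≤ treeSize b N →
      ∑ t ∈ range N, (n - treeSize b t) = ∑ t ∈ range (M + n), (n - treeSize b t) := by
    intro N hN hnN
    refine sum_subset (range_subset_range.mpr hN) fun t _ ht => ?_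
    have := treeSize_mono b (not_lt.mp (mem_range.not.mp ht))
    omega
  exact (extend n (by omega) (le_treeSize hb n)).trans (extend M (by omega) hn).symm

lemma sum_range_le_depthSum (hb : 1 ≤ b) (M n : ℕ) :
    ∑ t ∈ range M, (n - treeSize b t) ≤ depthSum b n := by
  rw [depthSum_eq_sum_range hb ((le_treeSize hb n).trans (treeSize_mono b (Nat.le_add_left n M)))]
  exact sum_le_sum_of_subset (range_subset_range.mpr (Nat.le_add_right M n))

lemma depthSum_eq_of_treeSize_le (hb : 1 ≤ b) {k n : ℕ} (hk : treeSize b k ≤ n)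
    (hn : n ≤ treeSize b (k + 1)) :
    depthSum b n = ∑ i ∈ range k, (i + 1) * b ^ i + (k + 1) * (n - treeSize b k) := by
  have hsplit : ∀ t ∈ range (k + 1),
      n - treeSize b t = (n - treeSize b k) + (treeSize b k - treeSize b t) := by
    intro t ht
    have := treeSize_mono b (Nat.lt_succ_iff.mp (mem_range.mp ht))
    omega
  rw [depthSum_eq_sum_range hb hn, sum_congr rfl hsplit, sum_add_distrib, sum_const, card_range,
    smul_eq_mul, sum_treeSize_sub, add_comm]

lemma depthSum_one (n : ℕ) : depthSum 1 n = n * (n + 1) / 2 := by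
  simp only [depthSum, treeSize_one]
  rw [← sum_range_reflect]
  have hterm : ∀ j ∈ range n, n - (n - 1 - j) = j + 1 := fun j hj => by
    have := mem_range.mp hj
    omega
  rw [sum_congr rfl hterm, ← add_zero (∑ j ∈ range n, (j + 1)), ← sum_range_succ' (fun j => j),
    sum_range_id, Nat.add_sub_cancel, mul_comm]

lemma depthSum_antitone_left (h : b ≤ b') (n : ℕ) : depthSum b' n ≤ depthSum b n :=
  sum_le_sum fun t _ => Nat.sub_le_sub_left (treeSize_le_treeSize_left h t) n

lemma depthSum_le_add_sum {ι : Type*} (hb : 1 ≤ b) {T : Finset ι} {f : ι → ℕ} {n : ℕ}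
    (hT : #{r ∈ T | f r ≠ 0} ≤ b) (hn : n ≤ ∑ r ∈ T, f r + 1) :
    depthSum b n ≤ n + ∑ r ∈ T, depthSum b (f r) := by
  obtain _ | p := n
  · simp [depthSum]
  -- level `t + 1` below the guess holds at most the levels `t` of the `≤ b` nonempty subtrees
  have level : ∀ t, p + 1 - treeSize b (t + 1) ≤ ∑ r ∈ T, (f r - treeSize b t) := by
    intro t
    have hcover : ∑ r ∈ T, f r ≤
        ∑ r ∈ T, (f r - treeSize b t) + #{r ∈ T | f r ≠ 0} * treeSize b t :=
      calc ∑ r ∈ T, f r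
          ≤ ∑ r ∈ T, ((f r - treeSize b t) + if f r ≠ 0 then treeSize b t else 0) :=
            sum_le_sum fun r _ => by split_ifs <;> omega
        _ = _ := by rw [sum_add_distrib, ← sum_filter, sum_const, smul_eq_mul]
    have := Nat.mul_le_mul_right (treeSize b t) hT
    rw [treeSize_succ']
    omega
  calc depthSum b (p + 1)
      = ∑ t ∈ range p, (p + 1 - treeSize b (t + 1)) + (p + 1) := by
        rw [depthSum, sum_range_succ']
        simp [treeSize]
    _ ≤ ∑ t ∈ range p, ∑ r ∈ T, (f r - treeSize b t) + (p + 1) := by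
        gcongr with t
        exact level t
    _ = ∑ r ∈ T, ∑ t ∈ range p, (f r - treeSize b t) + (p + 1) := by rw [sum_comm]
    _ ≤ ∑ r ∈ T, depthSum b (f r) + (p + 1) := by
        gcongr with r
        exact sum_range_le_depthSum hb p (f r)
    _ = _ := add_comm _ _

end DepthSum

lemma bound_eq_depthSum {b : ℕ} (hb : 1 ≤ b) (n : ℕ) : Bound n b = depthSum b n := by
  rcases Nat.eq_zero_or_pos n with rfl | hn
  · simp [Bound, depthSum]
  obtain rfl | hb2 := hb.eq_or_lt
  · simp [Bound, hn.ne', depthSum_one]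
  have hk : treeSize b (Nat.log b (n * (b - 1) + 1)) ≤ n :=
    (treeSize_le_iff hb2).2 (Nat.pow_log_le_self b (by omega))
  have hk1 : n < treeSize b (Nat.log b (n * (b - 1) + 1) + 1) := lt_of_not_ge fun h =>
    (Nat.lt_pow_succ_log_self hb2 _).not_ge ((treeSize_le_iff hb2).1 h)
  rw [depthSum_eq_of_treeSize_le hb hk hk1.le, treeSize, Nat.geomSum_eq hb2]
  simp [Bound, hn.ne', hb2.ne']

lemma bound_antitone_right {b b' : ℕ} (hb : 1 ≤ b) (h : b ≤ b') (n : ℕ) :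
    Bound n b' ≤ Bound n b := by
  rw [bound_eq_depthSum hb, bound_eq_depthSum (hb.trans h)]
  exact depthSum_antitone_left h n

namespace GuessingGame

variable {α ρ : Type*} [DecidableEq α] [DecidableEq ρ] {gm : GuessingGame α ρ}
  {C D : Finset α} {g c : α} {r : ρ}

lemma split_subset : gm.split C g r ⊆ C :=
  filter_subset _ _

lemma mem_split : c ∈ gm.split C g r ↔ c ∈ C ∧ gm.ans g c = r :=
  mem_filter

lemma ans_self (hc : c ∈ gm.S) : gm.ans c c = gm.rstar :=
  (gm.ans_eq_rstar_iff c (gm.S_subset_G hc) c hc).2 rfl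

lemma ans_mem_filter_split (hg : g ∈ gm.G) (hCS : C ⊆ gm.S) (hc : c ∈ C) :
    gm.ans g c ∈ gm.R.filter fun r => (gm.split C g r).Nonempty :=
  mem_filter.2 ⟨gm.ans_mem g hg c (hCS hc), c, mem_split.2 ⟨hc, rfl⟩⟩

lemma nSplits_le_maxSplits (hg : g ∈ gm.G) : gm.nSplits g C ≤ gm.MaxSplits C :=
  le_sup (f := fun g => gm.nSplits g C) hg

lemma maxSplits_mono (h : D ⊆ C) : gm.MaxSplits D ≤ gm.MaxSplits C :=
  sup_mono_fun fun _ _ => card_le_card <| monotone_filter_right _ fun _ _ hr =>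
    hr.mono (filter_subset_filter _ h)

lemma one_le_maxSplits (hCS : C ⊆ gm.S) (hC : C.Nonempty) : 1 ≤ gm.MaxSplits C := by
  obtain ⟨c, hc⟩ := hC
  have hcG := gm.S_subset_G (hCS hc)
  exact (card_pos.2 ⟨_, ans_mem_filter_split hcG hCS hc⟩).trans_le (nSplits_le_maxSplits hcG)

lemma two_le_nSplits (hCS : C ⊆ gm.S) (hc : c ∈ C) (hC : 1 < #C) : 2 ≤ gm.nSplits c C := by
  obtain ⟨c', hc', hne⟩ := exists_mem_ne hC c
  have hcG := gm.S_subset_G (hCS hc)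
  have hrstar := ans_mem_filter_split hcG hCS hc
  rw [ans_self (hCS hc)] at hrstar
  refine one_lt_card.2 ⟨_, hrstar, _, ans_mem_filter_split hcG hCS hc', fun h => hne ?_⟩
  exact ((gm.ans_eq_rstar_iff c hcG c' (hCS hc')).1 h.symm).symm

lemma nSplits_eq_one (hg : g ∈ gm.G) (hCS : C ⊆ gm.S) (hC : C.Nonempty)
    (h : ∀ c ∈ C, gm.ans g c = r) : gm.nSplits g C = 1 := by
  obtain ⟨c, hc⟩ := hC
  refine card_eq_one.2 ⟨r, eq_singleton_iff_unique_mem.2 ⟨?_, fun r' hr' => ?_⟩⟩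
  · simpa only [h c hc] using ans_mem_filter_split hg hCS hc
  · obtain ⟨c', hc'⟩ := (mem_filter.1 hr').2
    obtain ⟨hc'C, rfl⟩ := mem_split.1 hc'
    exact h c' hc'C

lemma UG_subset_G (hCS : C ⊆ gm.S) : gm.UG C ⊆ gm.G := by
  unfold UG
  split_ifs
  · exact filter_subset _ _
  · exact hCS.trans gm.S_subset_G

lemma UG_nonempty (hCS : C ⊆ gm.S) (hC : C.Nonempty) : (gm.UG C).Nonempty := by
  unfold UG
  split_ifs with h
  · obtain ⟨c, hc⟩ := hC
    exact ⟨c, mem_filter.2 ⟨gm.S_subset_G (hCS hc), by have := two_le_nSplits hCS hc h; omega⟩⟩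
  · exact hC

lemma split_ssubset (hCS : C ⊆ gm.S) (hC : C.Nonempty) (hg : g ∈ gm.UG C) (hr : r ≠ gm.rstar) :
    gm.split C g r ⊂ C := by
  refine split_subset.ssubset_of_ne fun heq => ?_
  have hall : ∀ c ∈ C, gm.ans g c = r := fun c hc => (mem_split.1 (heq ▸ hc)).2
  unfold UG at hg
  split_ifs at hg with hcard
  · exact (mem_filter.1 hg).2 (nSplits_eq_one (mem_filter.1 hg).1 hCS hC hall)
  · exact hr (hall g hg ▸ ans_self (hCS hg))

lemma card_le_sum_card_split_add_one (hg : g ∈ gm.G) (hCS : C ⊆ gm.S) :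
    #C ≤ ∑ r ∈ gm.R.erase gm.rstar, #(gm.split C g r) + 1 := by
  have hfiber : #C = ∑ r ∈ gm.R, #(gm.split C g r) :=
    card_eq_sum_card_fiberwise fun c hc => gm.ans_mem g hg c (hCS hc)
  have hstar : #(gm.split C g gm.rstar) ≤ 1 := card_le_one.2 fun c hc c' hc' => by
    obtain ⟨hcC, hcr⟩ := mem_split.1 hc
    obtain ⟨hc'C, hc'r⟩ := mem_split.1 hc'
    rw [← (gm.ans_eq_rstar_iff g hg c (hCS hcC)).1 hcr,
      (gm.ans_eq_rstar_iff g hg c' (hCS hc'C)).1 hc'r]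
  rw [hfiber, ← add_sum_erase _ _ gm.rstar_mem]
  omega

lemma card_filter_card_split_ne_zero_le (hg : g ∈ gm.G) :
    #{r ∈ gm.R.erase gm.rstar | #(gm.split C g r) ≠ 0} ≤ gm.MaxSplits C := by
  refine (card_le_card fun r hr => ?_).trans (nSplits_le_maxSplits hg)
  obtain ⟨hrR, hr0⟩ := mem_filter.1 hr
  exact mem_filter.2 ⟨mem_of_mem_erase hrR, card_ne_zero.1 hr0⟩

lemma bound_card_le_card_add_sum (hg : g ∈ gm.G) (hCS : C ⊆ gm.S) {b : ℕ} (hb : 1 ≤ b)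
    (hC : gm.MaxSplits C ≤ b) :
    Bound #C b ≤ #C + ∑ r ∈ gm.R.erase gm.rstar, Bound #(gm.split C g r) b := by
  simp only [bound_eq_depthSum hb]
  exact depthSum_le_add_sum hb ((card_filter_card_split_ne_zero_le hg).trans hC)
    (card_le_sum_card_split_add_one hg hCS)

variable (gm) in
noncomputable def bestGuessCost (F : Finset α → ℕ) (C : Finset α) : ℕ :=
  sInf (↑((gm.UG C).image fun g => #C + ∑ r ∈ gm.R.erase gm.rstar, F (gm.split C g r)) : Set ℕ)

lemma bestGuessCost_le {F : Finset α → ℕ} {g : α} (hg : g ∈ gm.UG C) :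
    gm.bestGuessCost F C ≤ #C + ∑ r ∈ gm.R.erase gm.rstar, F (gm.split C g r) :=
  Nat.sInf_le (mem_coe.2 (mem_image_of_mem _ hg))

lemma le_bestGuessCost {F : Finset α → ℕ} {a : ℕ} (hCS : C ⊆ gm.S) (hC : C.Nonempty)
    (h : ∀ g ∈ gm.UG C, a ≤ #C + ∑ r ∈ gm.R.erase gm.rstar, F (gm.split C g r)) :
    a ≤ gm.bestGuessCost F C := by
  refine le_csInf ((UG_nonempty hCS hC).image _) fun y hy => ?_
  obtain ⟨g, hg, rfl⟩ := mem_image.1 (mem_coe.1 hy)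
  exact h g hg

lemma bestGuessCost_mono {F H : Finset α → ℕ} (hCS : C ⊆ gm.S) (hC : C.Nonempty)
    (h : ∀ D ⊂ C, F D ≤ H D) : gm.bestGuessCost F C ≤ gm.bestGuessCost H C :=
  le_bestGuessCost hCS hC fun _g hg => (bestGuessCost_le hg).trans <| Nat.add_le_add_left
    (sum_le_sum fun _r hr => h _ (split_ssubset hCS hC hg (ne_of_mem_erase hr))) _

lemma bestGuessCost_congr {F H : Finset α → ℕ} (hCS : C ⊆ gm.S) (hC : C.Nonempty)
    (h : ∀ D ⊂ C, F D = H D) : gm.bestGuessCost F C = gm.bestGuessCost H C :=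
  (bestGuessCost_mono hCS hC fun D hD => (h D hD).le).antisymm
    (bestGuessCost_mono hCS hC fun D hD => (h D hD).ge)

lemma MinTotalAux_empty (m : ℕ) : gm.MinTotalAux m ∅ = 0 := by
  cases m <;> simp [MinTotalAux]

lemma MinTotalAux_succ (m : ℕ) (hC : C.Nonempty) :
    gm.MinTotalAux (m + 1) C = gm.bestGuessCost (gm.MinTotalAux m) C := by
  rw [MinTotalAux, if_neg hC.ne_empty, bestGuessCost]

lemma MinTotalAux_eq_MinTotal (m : ℕ) (hCS : C ⊆ gm.S) (hm : #C ≤ m) :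
    gm.MinTotalAux m C = gm.MinTotal C := by
  induction m using Nat.strong_induction_on generalizing C with
  | _ m ih =>
  obtain rfl | hC := C.eq_empty_or_nonempty
  · simp [MinTotal, MinTotalAux_empty]
  obtain ⟨c, hc⟩ : ∃ c, #C = c + 1 := Nat.exists_eq_add_one.2 (card_pos.2 hC)
  obtain ⟨m, rfl⟩ : ∃ m', m = m' + 1 := Nat.exists_eq_add_one.2 (by omega)
  have hsub : ∀ D ⊂ C, D ⊆ gm.S ∧ #D ≤ c := fun D hD =>
    ⟨hD.subset.trans hCS, by have := card_lt_card hD; omega⟩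
  rw [MinTotal, hc, MinTotalAux_succ m hC, MinTotalAux_succ c hC]
  refine (bestGuessCost_congr (H := gm.MinTotal) hCS hC fun D hD => ?_).trans
    (bestGuessCost_congr hCS hC fun D hD => ?_).symm
  · exact ih m (by omega) (hsub D hD).1 ((hsub D hD).2.trans (by omega))
  · exact ih c (by omega) (hsub D hD).1 (hsub D hD).2

lemma MinTotal_empty : gm.MinTotal ∅ = 0 :=
  MinTotalAux_empty _

lemma MinTotal_eq_bestGuessCost (hCS : C ⊆ gm.S) (hC : C.Nonempty) :
    gm.MinTotal C = gm.bestGuessCost gm.MinTotal C := by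
  obtain ⟨c, hc⟩ : ∃ c, #C = c + 1 := Nat.exists_eq_add_one.2 (card_pos.2 hC)
  rw [MinTotal, hc, MinTotalAux_succ c hC]
  refine bestGuessCost_congr hCS hC fun D hD => MinTotalAux_eq_MinTotal c (hD.subset.trans hCS) ?_
  have := card_lt_card hD
  omega

lemma LB_empty (n : ℕ) : gm.LB n ∅ = 0 := by
  match n with
  | 0 => rfl
  | 1 | 2 => simp [LB, Bound]
  | n + 3 => simp [LB]

lemma LB_add_three (n : ℕ) (hC : C.Nonempty) :
    gm.LB (n + 3) C = gm.bestGuessCost (gm.LB (n + 1)) C := by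
  rw [LB, if_neg hC.ne_empty, bestGuessCost]

lemma LB_one_le_LB_three (hCS : C ⊆ gm.S) : gm.LB 1 C ≤ gm.LB 3 C := by
  obtain rfl | hC := C.eq_empty_or_nonempty
  · simp [LB_empty]
  rw [LB_add_three 0 hC]
  refine le_bestGuessCost hCS hC fun g hg => bound_card_le_card_add_sum (UG_subset_G hCS hg) hCS
    ((one_le_maxSplits hCS hC).trans (maxSplits_mono hCS)) (maxSplits_mono hCS)

lemma LB_two_le_LB_four (hCS : C ⊆ gm.S) : gm.LB 2 C ≤ gm.LB 4 C := by
  obtain rfl | hC := C.eq_empty_or_nonempty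
  · simp [LB_empty]
  rw [LB_add_three 1 hC]
  refine le_bestGuessCost hCS hC fun g hg =>
    (bound_card_le_card_add_sum (UG_subset_G hCS hg) hCS (one_le_maxSplits hCS hC) le_rfl).trans
      (Nat.add_le_add_left (sum_le_sum fun r _ => ?_) _)
  obtain hD | hD := (gm.split C g r).eq_empty_or_nonempty
  · simp [hD, Bound]
  exact bound_antitone_right (one_le_maxSplits (split_subset.trans hCS) hD)
    (maxSplits_mono split_subset) _

lemma LB_add_three_le_LB_add_five (n : ℕ) (hCS : C ⊆ gm.S)
    (h : ∀ D ⊂ C, gm.LB (n + 1) D ≤ gm.LB (n + 3) D) : gm.LB (n + 3) C ≤ gm.LB (n + 5) C := by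
  obtain rfl | hC := C.eq_empty_or_nonempty
  · simp [LB_empty]
  rw [LB_add_three n hC, LB_add_three (n + 2) hC]
  exact bestGuessCost_mono hCS hC h

lemma LB_add_three_le_MinTotal (n : ℕ) (hCS : C ⊆ gm.S)
    (h : ∀ D ⊂ C, gm.LB (n + 1) D ≤ gm.MinTotal D) : gm.LB (n + 3) C ≤ gm.MinTotal C := by
  obtain rfl | hC := C.eq_empty_or_nonempty
  · simp [LB_empty, MinTotal_empty]
  rw [LB_add_three n hC, MinTotal_eq_bestGuessCost hCS hC]
  exact bestGuessCost_mono hCS hC h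

end GuessingGame

section Statements

open GuessingGame

variable {α ρ : Type*} [DecidableEq α] [DecidableEq ρ]

theorem statement_15 (gm : GuessingGame α ρ) (n : ℕ) (hn : 1 ≤ n)
    (C : Finset α) (hCS : C ⊆ gm.S) :
    gm.LB n C ≤ gm.LB (n + 2) C ∧ gm.LB (n + 2) C ≤ gm.MinTotal C := by
  induction C using Finset.strongInduction generalizing n with
  | H C ih =>
  have ih' (k : ℕ) (D : Finset α) (hD : D ⊂ C) :
      gm.LB (k + 1) D ≤ gm.LB (k + 3) D ∧ gm.LB (k + 3) D ≤ gm.MinTotal D :=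
    ih D hD (k + 1) le_add_self (hD.subset.trans hCS)
  obtain ⟨m, rfl⟩ := Nat.exists_eq_add_of_le' hn
  refine ⟨?_, LB_add_three_le_MinTotal m hCS fun D hD => (ih' m D hD).1.trans (ih' m D hD).2⟩
  match m with
  | 0 => exact LB_one_le_LB_three hCS
  | 1 => exact LB_two_le_LB_four hCS
  | k + 2 => exact LB_add_three_le_LB_add_five k hCS fun D hD => (ih' k D hD).1

end Statements
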